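/- For every natural number k ≥ 1, there exists a Boolean function f (on (4k+2)(3k+2) variables) such that bs(f) = (2/3)·s(f)² − (1/3)·s(f), where s(f) = 3k+2. In particular, there exist Boolean functions of arbitrarily large sensitivity whose block sensitivity equals (2/3)s(f)² − (1/3)s(f). -/

import Mathlib

section Defs

variable {ι : Type} [Fintype ι] [DecidableEq ι]

/-- `flipBit x i` is `x` with its `i`-th bit flipped. -/
def flipBit (x : ι → Bool) (i : ι) : ι → Bool :=
  Function.update x i (!x i)

/-- `flipBlock x B` is `x` with all bits indexed by `B` flipped. -/
def flipBlock (x : ι → Bool) (B : Finset ι) : ι → Bool :=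
  fun j => if j ∈ B then !x j else x j

/-- The sensitivity of `f` at `x`: the number of `i` with `f (x^(i)) ≠ f x`. -/
def sensAt (f : (ι → Bool) → Bool) (x : ι → Bool) : ℕ :=
  (Finset.univ.filter fun i => f (flipBit x i) ≠ f x).card

/-- The sensitivity `s(f) = max_x s(f,x)`. -/
def sens (f : (ι → Bool) → Bool) : ℕ :=
  Finset.univ.sup (sensAt f)

/-- The 0-sensitivity `s₀(f) = max_{x : f x = 0} s(f,x)`. -/
def sens0 (f : (ι → Bool) → Bool) : ℕ :=
  (Finset.univ.filter fun x => f x = false).sup (sensAt f)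

/-- The 1-sensitivity `s₁(f) = max_{x : f x = 1} s(f,x)`. -/
def sens1 (f : (ι → Bool) → Bool) : ℕ :=
  (Finset.univ.filter fun x => f x = true).sup (sensAt f)

/-- The block sensitivity of `f` at `x`: the largest `b` such that there are
`b` pairwise disjoint blocks on which flipping `x` changes the value of `f`. -/
noncomputable def bsAt (f : (ι → Bool) → Bool) (x : ι → Bool) : ℕ :=
  sSup {b : ℕ | ∃ Bl : Fin b → Finset ι,
    (Pairwise fun p q => Disjoint (Bl p) (Bl q)) ∧
    ∀ p, f (flipBlock x (Bl p)) ≠ f x}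

/-- The block sensitivity `bs(f) = max_x bs(f,x)`. -/
noncomputable def bs (f : (ι → Bool) → Bool) : ℕ :=
  Finset.univ.sup (bsAt f)

/-- The 0-block-sensitivity `bs₀(f) = max_{x : f x = 0} bs(f,x)`. -/
noncomputable def bs0 (f : (ι → Bool) → Bool) : ℕ :=
  (Finset.univ.filter fun x => f x = false).sup (bsAt f)

end Defs

/-!
The witness is the Ambainis–Sun function: the `OR` of `3k+2` disjoint copies of a function `g`
on the bits `(j, b) : Fin (2k+1) × Bool`. For each vertex `i` of the circulant tournament on
`ℤ/(2k+1)`, `g` accepts the subcube in which row `b = true` is the indicator of `i`, and row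
`b = false` is `1` at `i`, free at the `k` out-neighbours of `i` and `0` elsewhere.

As the tournament is asymmetric, points of distinct subcubes are at Hamming distance at least
`3`, so a `0`-input of `g` has at most one sensitive bit, while a `1`-input is sensitive only on
the `3k+2` fixed bits of its subcube; hence `s = 3k+2` for the `OR`. At a `0`-input, disjoint
sensitive blocks lead into distinct subcubes, of which there are `(3k+2)(2k+1)`, and the all-zero
input attains this with the blocks `{(i, true), (i, false)}` in each copy; at a `1`-input every
sensitive block meets the accepting copy, which has only `4k+2` bits. So `bs = (3k+2)(2k+1)`,
and `3·bs = s(2s-1)`.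
-/
open Finset Function

section Flip

variable {ι : Type} [DecidableEq ι]

lemma flipBit_apply_self (x : ι → Bool) (i : ι) : flipBit x i i = !x i :=
  update_self _ _ _

lemma flipBit_apply_of_ne (x : ι → Bool) {i j : ι} (h : j ≠ i) : flipBit x i j = x j :=
  update_of_ne h _ _

lemma flipBlock_empty (x : ι → Bool) : flipBlock x ∅ = x := by
  funext j
  simp [flipBlock]

lemma flipBlock_singleton (x : ι → Bool) (i : ι) : flipBlock x {i} = flipBit x i := by
  funext j
  by_cases h : j = i
  · subst h
    simp [flipBlock, flipBit_apply_self]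
  · simp [flipBlock, flipBit_apply_of_ne x h, h]

lemma flipBlock_mix (x : ι → Bool) {B B' : Finset ι} (h : Disjoint B B') (j : ι) :
    x j = flipBlock x B j ∨ x j = flipBlock x B' j := by
  by_cases hj : j ∈ B
  · simp [flipBlock, disjoint_left.mp h hj]
  · simp [flipBlock, hj]

lemma hammingDist_flipBit_le [Fintype ι] (x : ι → Bool) (i : ι) :
    hammingDist x (flipBit x i) ≤ 1 := by
  refine card_le_one.mpr fun a ha b hb => ?_
  simp only [mem_filter, mem_univ, true_and] at ha hb
  by_contra hab
  rcases eq_or_ne a i with rfl | hai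
  · exact hb (flipBit_apply_of_ne x (Ne.symm hab)).symm
  · exact ha (flipBit_apply_of_ne x hai).symm

end Flip

section Sensitivity

variable {ι : Type} [DecidableEq ι] {f : (ι → Bool) → Bool} {x : ι → Bool}

def SensitiveBlocks {β : Type} (f : (ι → Bool) → Bool) (x : ι → Bool) (Bl : β → Finset ι) :
    Prop :=
  Pairwise (Disjoint on Bl) ∧ ∀ p, f (flipBlock x (Bl p)) ≠ f x

lemma sensitiveBlocks_elim0 : SensitiveBlocks f x (Fin.elim0 : Fin 0 → Finset ι) :=
  ⟨fun p => p.elim0, fun p => p.elim0⟩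

lemma SensitiveBlocks.comp {β γ : Type} {Bl : β → Finset ι} (h : SensitiveBlocks f x Bl)
    {e : γ → β} (he : Injective e) : SensitiveBlocks f x (Bl ∘ e) :=
  ⟨h.1.comp_of_injective he, fun p => h.2 (e p)⟩

lemma bsAt_le_of_forall {n : ℕ}
    (h : ∀ b (Bl : Fin b → Finset ι), SensitiveBlocks f x Bl → b ≤ n) : bsAt f x ≤ n :=
  csSup_le ⟨0, _, sensitiveBlocks_elim0⟩ fun b ⟨Bl, hBl⟩ => h b Bl hBl

variable [Fintype ι]

lemma sensAt_le_sens (f : (ι → Bool) → Bool) (x : ι → Bool) : sensAt f x ≤ sens f :=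
  le_sup (mem_univ x)

lemma sensAt_le_sens0 (hx : f x = false) : sensAt f x ≤ sens0 f :=
  le_sup (by simpa using hx)

lemma sensAt_le_sens1 (hx : f x = true) : sensAt f x ≤ sens1 f :=
  le_sup (by simpa using hx)

lemma bsAt_le_bs (f : (ι → Bool) → Bool) (x : ι → Bool) : bsAt f x ≤ bs f :=
  le_sup (mem_univ x)

lemma SensitiveBlocks.card_le {β : Type} [Fintype β] {Bl : β → Finset ι}
    (h : SensitiveBlocks f x Bl) : Fintype.card β ≤ Fintype.card ι := by
  have hne : ∀ p, (Bl p).Nonempty := fun p =>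
    nonempty_iff_ne_empty.mpr fun hp => h.2 p (by rw [hp, flipBlock_empty])
  choose a ha using hne
  refine Fintype.card_le_of_injective a fun p q hpq => ?_
  by_contra hne
  exact disjoint_left.mp (h.1 hne) (ha p) (hpq ▸ ha q)

lemma bddAbove_sensitiveBlocks :
    BddAbove {b : ℕ | ∃ Bl : Fin b → Finset ι, SensitiveBlocks f x Bl} :=
  ⟨Fintype.card ι, fun b ⟨_, h⟩ => by simpa using h.card_le⟩

lemma SensitiveBlocks.card_le_bsAt {β : Type} [Fintype β] {Bl : β → Finset ι}
    (h : SensitiveBlocks f x Bl) : Fintype.card β ≤ bsAt f x :=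
  le_csSup bddAbove_sensitiveBlocks ⟨_, h.comp (Fintype.equivFin β).symm.injective⟩

lemma exists_sensitiveBlocks_bsAt (f : (ι → Bool) → Bool) (x : ι → Bool) :
    ∃ Bl : Fin (bsAt f x) → Finset ι, SensitiveBlocks f x Bl :=
  Nat.sSup_mem (s := {b | ∃ Bl : Fin b → Finset ι, SensitiveBlocks f x Bl})
    ⟨0, _, sensitiveBlocks_elim0⟩ bddAbove_sensitiveBlocks

end Sensitivity

section Transport

variable {ι κ : Type} [DecidableEq ι] [DecidableEq κ] (e : ι ≃ κ) (f : (ι → Bool) → Bool)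

lemma flipBit_comp_equiv (y : κ → Bool) (j : κ) :
    flipBit y j ∘ e = flipBit (y ∘ e) (e.symm j) := by
  funext i
  by_cases h : e i = j
  · subst h
    simp [flipBit_apply_self]
  · rw [comp_apply, flipBit_apply_of_ne y h, flipBit_apply_of_ne _ fun hi => h (by simp [hi])]
    rfl

lemma flipBlock_comp_equiv (y : κ → Bool) (B : Finset κ) :
    flipBlock y B ∘ e = flipBlock (y ∘ e) (B.map e.symm.toEmbedding) := by
  funext i
  simp [flipBlock, mem_map_equiv]

variable [Fintype ι]

lemma sensAt_comp_equiv_le [Fintype κ] (y : κ → Bool) :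
    sensAt (fun z => f (z ∘ e)) y ≤ sensAt f (y ∘ e) :=
  card_le_card_of_injOn e.symm (fun j hj => by simpa [← flipBit_comp_equiv] using hj)
    e.symm.injective.injOn

lemma bsAt_comp_equiv_le (y : κ → Bool) :
    bsAt (fun z => f (z ∘ e)) y ≤ bsAt f (y ∘ e) :=
  bsAt_le_of_forall fun b Bl hBl => by
    have h : SensitiveBlocks f (y ∘ e) fun p => (Bl p).map e.symm.toEmbedding :=
      ⟨fun p q hpq => (disjoint_map _).mpr (hBl.1 hpq), fun p => by
        simpa [← flipBlock_comp_equiv] using hBl.2 p⟩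
    simpa using h.card_le_bsAt

lemma sens_comp_equiv [Fintype κ] : sens (fun z : κ → Bool => f (z ∘ e)) = sens f := by
  refine le_antisymm
    (Finset.sup_le fun y _ => (sensAt_comp_equiv_le e f y).trans (sensAt_le_sens _ _)) ?_
  have hf : (fun y : ι → Bool => f ((y ∘ e.symm) ∘ e)) = f := by simp [comp_assoc]
  conv_lhs => rw [← hf]
  exact Finset.sup_le fun y _ =>
    (sensAt_comp_equiv_le e.symm (fun z => f (z ∘ e)) y).trans (sensAt_le_sens _ _)

lemma bs_comp_equiv [Fintype κ] : bs (fun z : κ → Bool => f (z ∘ e)) = bs f := by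
  refine le_antisymm
    (Finset.sup_le fun y _ => (bsAt_comp_equiv_le e f y).trans (bsAt_le_bs _ _)) ?_
  have hf : (fun y : ι → Bool => f ((y ∘ e.symm) ∘ e)) = f := by simp [comp_assoc]
  conv_lhs => rw [← hf]
  exact Finset.sup_le fun y _ =>
    (bsAt_comp_equiv_le e.symm (fun z => f (z ∘ e)) y).trans (bsAt_le_bs _ _)

end Transport

section Subcube

variable {ι : Type} {α : Type*}

/-- Over `Bool`, the nonempty sets closed under coordinatewise mixing are exactly the subcubes. -/
def IsSubcube (S : Set (ι → α)) : Prop :=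
  ∀ ⦃x y z : ι → α⦄, y ∈ S → z ∈ S → (∀ i, x i = y i ∨ x i = z i) → x ∈ S

variable [DecidableEq ι] {f : (ι → Bool) → Bool} {x : ι → Bool} {τ : Type}
  {P : τ → Set (ι → Bool)}

lemma bsAt_le_card_of_subcubes [Fintype τ] (hP : ∀ t, IsSubcube (P t))
    (hf : ∀ y, f y = true ↔ ∃ t, y ∈ P t) (hx : f x = false) : bsAt f x ≤ Fintype.card τ :=
  bsAt_le_of_forall fun b Bl hBl => by
    have hmem : ∀ p, ∃ t, flipBlock x (Bl p) ∈ P t := fun p =>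
      (hf _).mp (by simpa [hx] using hBl.2 p)
    choose t ht using hmem
    -- two disjoint blocks leading into the same subcube would put `x` itself in it
    have hinj : Injective t := fun p q hpq => by
      by_contra hne
      have hxP : x ∈ P (t p) := hP _ (ht p) (hpq ▸ ht q) (flipBlock_mix x (hBl.1 hne))
      simpa [hx] using (hf x).mpr ⟨_, hxP⟩
    simpa using Fintype.card_le_of_injective t hinj

lemma sensAt_le_one_of_subcubes [Fintype ι] (hP : ∀ t, IsSubcube (P t))
    (hsep : ∀ t t', t ≠ t' → ∀ y ∈ P t, ∀ y' ∈ P t', 3 ≤ hammingDist y y')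
    (hf : ∀ y, f y = true ↔ ∃ t, y ∈ P t) (hx : f x = false) : sensAt f x ≤ 1 := by
  refine card_le_one.mpr fun a ha a' ha' => ?_
  simp only [mem_filter, mem_univ, true_and, hx, ne_eq, Bool.not_eq_false] at ha ha'
  obtain ⟨t, hy⟩ := (hf _).mp ha
  obtain ⟨t', hy'⟩ := (hf _).mp ha'
  by_contra hne
  have hxP : x ∉ P t := fun h => by simpa [hx] using (hf x).mpr ⟨t, h⟩
  rcases eq_or_ne t t' with rfl | htt'
  · refine hxP (hP t hy hy' ?_)
    simpa [flipBlock_singleton] using flipBlock_mix x (disjoint_singleton.mpr hne)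
  · have hdist : hammingDist (flipBit x a) (flipBit x a') ≤ 2 :=
      calc hammingDist (flipBit x a) (flipBit x a')
          ≤ hammingDist (flipBit x a) x + hammingDist x (flipBit x a') := hammingDist_triangle ..
        _ ≤ 1 + 1 := by
          rw [hammingDist_comm]
          exact add_le_add (hammingDist_flipBit_le x a) (hammingDist_flipBit_le x a')
    have := hsep t t' htt' _ hy _ hy'
    omega

end Subcube

section Copies

variable {ι κ : Type} {α : Type*}

def copyAt (x : ι × κ → α) (c : κ) : ι → α := fun i => x (i, c)

lemma IsSubcube.preimage_copyAt {S : Set (ι → α)} (hS : IsSubcube S) (c : κ) :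
    IsSubcube {x : ι × κ → α | copyAt x c ∈ S} :=
  fun _ _ _ hy hz hmix => hS hy hz fun i => hmix (i, c)

variable [DecidableEq ι] [DecidableEq κ]

lemma copyAt_flipBit_self (x : ι × κ → Bool) (i : ι) (c : κ) :
    copyAt (flipBit x (i, c)) c = flipBit (copyAt x c) i := by
  funext j
  by_cases h : j = i
  · subst h
    simp [copyAt, flipBit_apply_self]
  · have h' : (j, c) ≠ (i, c) := fun e => h (congrArg Prod.fst e)
    simp [copyAt, flipBit_apply_of_ne _ h, flipBit_apply_of_ne x h']

lemma copyAt_flipBit_of_ne (x : ι × κ → Bool) (i : ι) {c c' : κ} (h : c' ≠ c) :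
    copyAt (flipBit x (i, c)) c' = copyAt x c' := by
  funext j
  exact flipBit_apply_of_ne x fun e => h (congrArg Prod.snd e)

lemma copyAt_flipBlock_of_forall_notMem (x : ι × κ → Bool) {B : Finset (ι × κ)} {c : κ}
    (h : ∀ i, (i, c) ∉ B) : copyAt (flipBlock x B) c = copyAt x c := by
  funext i
  simp [copyAt, flipBlock, h i]

lemma copyAt_flipBlock_product (x : ι × κ → Bool) (s : Finset ι) (c c' : κ) :
    copyAt (flipBlock x (s ×ˢ {c})) c' =
      if c' = c then flipBlock (copyAt x c') s else copyAt x c' := by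
  funext i
  by_cases h : c' = c <;> simp [copyAt, flipBlock, h, eq_comm]

end Copies

section OrComp

variable {ι κ : Type} [Fintype κ] {g : (ι → Bool) → Bool} {x : ι × κ → Bool}

def orComp (g : (ι → Bool) → Bool) (x : ι × κ → Bool) : Bool :=
  decide (∃ c, g (copyAt x c) = true)

lemma orComp_eq_true_iff : orComp g x = true ↔ ∃ c, g (copyAt x c) = true :=
  decide_eq_true_iff

lemma orComp_eq_false_iff : orComp g x = false ↔ ∀ c, g (copyAt x c) = false := by
  simp [orComp]

lemma orComp_eq_true_iff_of_subcubes {τ : Type} {P : τ → Set (ι → Bool)}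
    (hg : ∀ y, g y = true ↔ ∃ t, y ∈ P t) :
    orComp g x = true ↔ ∃ ct : κ × τ, x ∈ {y : ι × κ → Bool | copyAt y ct.1 ∈ P ct.2} := by
  simp [orComp_eq_true_iff, hg]

variable [DecidableEq ι] [DecidableEq κ]

lemma sensitive_copyAt_of_orComp_eq_false (hx : orComp g x = false) {i : ι} {c : κ}
    (h : orComp g (flipBit x (i, c)) ≠ orComp g x) :
    g (flipBit (copyAt x c) i) ≠ g (copyAt x c) := by
  rw [hx, ne_eq, Bool.not_eq_false, orComp_eq_true_iff] at h
  obtain ⟨c', hc'⟩ := h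
  rcases eq_or_ne c' c with rfl | hne
  · rw [← copyAt_flipBit_self, hc', orComp_eq_false_iff.mp hx]
    simp
  · rw [copyAt_flipBit_of_ne x i hne, orComp_eq_false_iff.mp hx] at hc'
    exact absurd hc' (by simp)

variable [Fintype ι]

lemma sensAt_orComp_le_of_eq_false (hx : orComp g x = false) :
    sensAt (orComp g) x ≤ Fintype.card κ * sens0 g := by
  refine (card_le_mul_card_image (f := Prod.snd) _ (sens0 g) fun c _ => ?_).trans ?_
  · refine (card_le_card_of_injOn Prod.fst (t := univ.filter fun i =>
        g (flipBit (copyAt x c) i) ≠ g (copyAt x c)) ?_ ?_).trans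
      (sensAt_le_sens0 (orComp_eq_false_iff.mp hx c))
    · rintro ⟨i, c'⟩ hv
      simp only [mem_coe, mem_filter, mem_univ, true_and] at hv ⊢
      exact hv.2 ▸ sensitive_copyAt_of_orComp_eq_false hx hv.1
    · rintro ⟨i, c'⟩ hv ⟨i', c''⟩ hv' (rfl : i = i')
      simp only [mem_coe, mem_filter] at hv hv'
      rw [hv.2, hv'.2]
  · rw [mul_comm]
    exact Nat.mul_le_mul_right _ (card_le_univ _)

lemma sensAt_orComp_le_of_copyAt_eq_true {c : κ} (hc : g (copyAt x c) = true) :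
    sensAt (orComp g) x ≤ sensAt g (copyAt x c) := by
  have hx : orComp g x = true := orComp_eq_true_iff.mpr ⟨c, hc⟩
  -- a sensitive bit must lie in copy `c`, since copy `c` alone keeps `orComp g` true
  have key : ∀ v : ι × κ, orComp g (flipBit x v) ≠ orComp g x →
      v.2 = c ∧ g (flipBit (copyAt x c) v.1) ≠ g (copyAt x c) := by
    rintro ⟨i, c'⟩ hv
    rw [hx, ne_eq, Bool.not_eq_true, orComp_eq_false_iff] at hv
    rcases eq_or_ne c c' with rfl | hne
    · rw [← copyAt_flipBit_self, hv, hc]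
      exact ⟨rfl, Bool.false_ne_true⟩
    · have := hv c
      rw [copyAt_flipBit_of_ne x i hne, hc] at this
      exact absurd this (by simp)
  refine card_le_card_of_injOn Prod.fst (fun v hv => ?_) fun v hv v' hv' h => ?_
  · simp only [mem_coe, mem_filter, mem_univ, true_and] at hv ⊢
    exact (key v hv).2
  · simp only [mem_coe, mem_filter, mem_univ, true_and] at hv hv'
    exact Prod.ext h ((key v hv).1.trans (key v' hv').1.symm)

lemma sens_orComp_le :
    sens (orComp (κ := κ) g) ≤ max (Fintype.card κ * sens0 g) (sens1 g) := by
  refine Finset.sup_le fun x _ => ?_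
  cases hx : orComp g x
  · exact (sensAt_orComp_le_of_eq_false hx).trans (le_max_left _ _)
  · obtain ⟨c, hc⟩ := orComp_eq_true_iff.mp hx
    exact (sensAt_orComp_le_of_copyAt_eq_true hc).trans
      ((sensAt_le_sens1 hc).trans (le_max_right _ _))

lemma sensAt_copyAt_le_sensAt_orComp {c : κ} (hc : g (copyAt x c) = true)
    (hother : ∀ c' ≠ c, g (copyAt x c') = false) :
    sensAt g (copyAt x c) ≤ sensAt (orComp g) x := by
  refine card_le_card_of_injOn (·, c) (fun i hi => ?_) fun i _ i' _ h => congrArg Prod.fst h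
  simp only [mem_coe, mem_filter, mem_univ, true_and] at hi ⊢
  have hflip : orComp g (flipBit x (i, c)) = false := orComp_eq_false_iff.mpr fun c' => by
    rcases eq_or_ne c' c with rfl | hne
    · rw [copyAt_flipBit_self]
      simpa [hc] using hi
    · rw [copyAt_flipBit_of_ne x i hne, hother c' hne]
  rw [hflip, orComp_eq_true_iff.mpr ⟨c, hc⟩]
  exact Bool.false_ne_true

lemma bsAt_orComp_le_of_copyAt_eq_true {c : κ} (hc : g (copyAt x c) = true) :
    bsAt (orComp g) x ≤ Fintype.card ι :=
  bsAt_le_of_forall fun b Bl hBl => by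
    have hmeet : ∀ p, ∃ i, (i, c) ∈ Bl p := fun p => by
      by_contra! h
      refine hBl.2 p ?_
      rw [orComp_eq_true_iff.mpr ⟨c, hc⟩, orComp_eq_true_iff]
      exact ⟨c, by rwa [copyAt_flipBlock_of_forall_notMem x h]⟩
    choose i hi using hmeet
    have hinj : Injective i := fun p q hpq => by
      by_contra hne
      exact disjoint_left.mp (hBl.1 hne) (hi p) (hpq ▸ hi q)
    simpa using Fintype.card_le_of_injective i hinj

lemma bs_orComp_le {τ : Type} [Fintype τ] {P : τ → Set (ι → Bool)}
    (hP : ∀ t, IsSubcube (P t)) (hg : ∀ y, g y = true ↔ ∃ t, y ∈ P t) :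
    bs (orComp (κ := κ) g) ≤ max (Fintype.card κ * Fintype.card τ) (Fintype.card ι) := by
  refine Finset.sup_le fun x _ => ?_
  cases hx : orComp g x
  · have := bsAt_le_card_of_subcubes (fun ct : κ × τ => (hP ct.2).preimage_copyAt ct.1)
      (fun y => orComp_eq_true_iff_of_subcubes hg) hx
    exact (this.trans_eq (Fintype.card_prod κ τ)).trans (le_max_left _ _)
  · obtain ⟨c, hc⟩ := orComp_eq_true_iff.mp hx
    exact (bsAt_orComp_le_of_copyAt_eq_true hc).trans (le_max_right _ _)

lemma mul_bsAt_le_bsAt_orComp {z : ι → Bool} (hz : g z = false) :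
    Fintype.card κ * bsAt g z ≤ bsAt (orComp g) fun v : ι × κ => z v.1 := by
  obtain ⟨Bl, hBl⟩ := exists_sensitiveBlocks_bsAt g z
  have h : SensitiveBlocks (orComp g) (fun v : ι × κ => z v.1) fun cp : κ × Fin (bsAt g z) =>
      Bl cp.2 ×ˢ {cp.1} := by
    refine ⟨fun ⟨c, p⟩ ⟨c', p'⟩ hne => disjoint_product.mpr ?_, fun ⟨c, p⟩ => ?_⟩
    · rcases eq_or_ne c c' with rfl | hc
      · exact Or.inl (hBl.1 fun hp => hne (congrArg (Prod.mk c) hp))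
      · exact Or.inr (disjoint_singleton.mpr hc)
    · have hz' : orComp g (fun v : ι × κ => z v.1) = false :=
        orComp_eq_false_iff.mpr fun _ => hz
      rw [hz', ne_eq, Bool.not_eq_false, orComp_eq_true_iff]
      refine ⟨c, ?_⟩
      rw [copyAt_flipBlock_product, if_pos rfl]
      exact (by simpa [hz] using hBl.2 p : g (flipBlock z (Bl p)) = true)
  simpa using h.card_le_bsAt

end OrComp

section AmbainisSun

variable {ν : Type} (R : ν → ν → Prop)

def ambainisSunTerm (i : ν) : Set (ν × Bool → Bool) :=
  {x | x (i, true) = true ∧ x (i, false) = true ∧ (∀ j ≠ i, x (j, true) = false) ∧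
    ∀ j, x (j, false) = true → j = i ∨ R i j}

open scoped Classical in
noncomputable def ambainisSun (x : ν × Bool → Bool) : Bool :=
  decide (∃ i, x ∈ ambainisSunTerm R i)

def freeVars [Fintype ν] [DecidableRel R] (i : ν) : Finset (ν × Bool) :=
  univ.filter (R i) ×ˢ {false}

variable {R}

lemma ambainisSun_eq_true_iff {x : ν × Bool → Bool} :
    ambainisSun R x = true ↔ ∃ i, x ∈ ambainisSunTerm R i := by
  simp [ambainisSun]

lemma ambainisSun_eq_false_iff {x : ν × Bool → Bool} :
    ambainisSun R x = false ↔ ∀ i, x ∉ ambainisSunTerm R i := by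
  simp [ambainisSun]

lemma ambainisSun_const_false : ambainisSun R (fun _ => false) = false :=
  ambainisSun_eq_false_iff.mpr fun _ h => by simpa using h.1

lemma isSubcube_ambainisSunTerm (i : ν) : IsSubcube (ambainisSunTerm R i) := by
  rintro x y z ⟨hy₁, hy₂, hy₃, hy₄⟩ ⟨hz₁, hz₂, hz₃, hz₄⟩ hmix
  refine ⟨?_, ?_, fun j hj => ?_, fun j hj => ?_⟩
  · rcases hmix (i, true) with h | h <;> rw [h] <;> assumption
  · rcases hmix (i, false) with h | h <;> rw [h] <;> assumption
  · rcases hmix (j, true) with h | h <;> rw [h]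
    exacts [hy₃ j hj, hz₃ j hj]
  · rcases hmix (j, false) with h | h <;> rw [h] at hj
    exacts [hy₄ j hj, hz₄ j hj]

variable [DecidableEq ν]

def centerIndicator (i : ν) : ν × Bool → Bool := fun a => decide (a.1 = i)

lemma centerIndicator_mem (i : ν) : centerIndicator i ∈ ambainisSunTerm R i := by
  refine ⟨by simp [centerIndicator], by simp [centerIndicator], fun j hj => ?_, fun j hj => ?_⟩
  · simp [centerIndicator, hj]
  · exact Or.inl (by simpa [centerIndicator] using hj)

lemma flipBit_mem_ambainisSunTerm (hR : ∀ i, ¬ R i i) {x : ν × Bool → Bool} {i j : ν}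
    (hx : x ∈ ambainisSunTerm R i) (hj : R i j) : flipBit x (j, false) ∈ ambainisSunTerm R i := by
  have hji : j ≠ i := fun h => hR i (h ▸ hj)
  obtain ⟨hx₁, hx₂, hx₃, hx₄⟩ := hx
  refine ⟨?_, ?_, fun j' hj' => ?_, fun j' hj' => ?_⟩
  · rwa [flipBit_apply_of_ne x (by simp)]
  · rwa [flipBit_apply_of_ne x (by simp [hji.symm])]
  · rw [flipBit_apply_of_ne x (by simp)]
    exact hx₃ j' hj'
  · by_cases e : j' = j
    · exact Or.inr (e ▸ hj)
    · rw [flipBit_apply_of_ne x (by simp [e])] at hj'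
      exact hx₄ j' hj'

variable [Fintype ν]

/-- Distinct terms disagree at `(i, true)`, at `(i', true)`, and (as `R` is asymmetric) in
row `false` at `i` or at `i'`. -/
lemma three_le_hammingDist_of_mem_ambainisSunTerm (hR : ∀ i j, R i j → ¬ R j i)
    {i i' : ν} (hii' : i ≠ i') {y y' : ν × Bool → Bool} (hy : y ∈ ambainisSunTerm R i)
    (hy' : y' ∈ ambainisSunTerm R i') : 3 ≤ hammingDist y y' := by
  wlog hR' : ¬ R i' i generalizing i i' y y'
  · rw [hammingDist_comm]
    exact this hii'.symm hy' hy (hR i' i (not_not.mp hR'))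
  have hsub : ({(i, true), (i', true), (i, false)} : Finset (ν × Bool)) ⊆
      univ.filter fun v => y v ≠ y' v := by
    intro v hv
    simp only [mem_insert, mem_singleton] at hv
    simp only [mem_filter, mem_univ, true_and]
    rcases hv with rfl | rfl | rfl
    · rw [hy.1, hy'.2.2.1 i hii']
      simp
    · rw [hy'.1, hy.2.2.1 i' hii'.symm]
      simp
    · rw [hy.2.1]
      intro h
      rcases hy'.2.2.2 i h.symm with h' | h'
      exacts [hii' h', hR' h']
  refine le_of_eq_of_le ?_ (card_le_card hsub)
  rw [card_insert_of_notMem (by simp [hii']), card_pair (by simp)]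

lemma sens0_ambainisSun_le_one (hR : ∀ i j, R i j → ¬ R j i) : sens0 (ambainisSun R) ≤ 1 :=
  Finset.sup_le fun _ hx => sensAt_le_one_of_subcubes isSubcube_ambainisSunTerm
    (fun _ _ h _ hy _ hy' => three_le_hammingDist_of_mem_ambainisSunTerm hR h hy hy')
    (fun _ => ambainisSun_eq_true_iff) (mem_filter.mp hx).2

lemma card_le_bsAt_ambainisSun : Fintype.card ν ≤ bsAt (ambainisSun R) fun _ => false := by
  refine SensitiveBlocks.card_le_bsAt (Bl := fun i => {i} ×ˢ univ)
    ⟨fun i i' h => disjoint_product.mpr (Or.inl (disjoint_singleton.mpr h)), fun i => ?_⟩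
  have hflip : flipBlock (fun _ => false) ({i} ×ˢ univ) = centerIndicator i := by
    funext ⟨j, b⟩
    cases b <;> simp [flipBlock, centerIndicator]
  rw [hflip, ambainisSun_eq_true_iff.mpr ⟨i, centerIndicator_mem i⟩, ambainisSun_const_false]
  simp

variable [DecidableRel R]

lemma sensAt_ambainisSun_le (hR : ∀ i, ¬ R i i) {x : ν × Bool → Bool} {i : ν}
    (hx : x ∈ ambainisSunTerm R i) : sensAt (ambainisSun R) x ≤ (freeVars R i)ᶜ.card := by
  refine card_le_card fun v hv => mem_compl.mpr fun hfree => ?_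
  obtain ⟨j, b⟩ := v
  simp only [freeVars, mem_product, mem_filter, mem_univ, true_and, mem_singleton] at hfree
  obtain ⟨hj, rfl⟩ := hfree
  have hflip := ambainisSun_eq_true_iff.mpr ⟨i, flipBit_mem_ambainisSunTerm hR hx hj⟩
  simp [hflip, ambainisSun_eq_true_iff.mpr ⟨i, hx⟩] at hv

lemma flipBit_centerIndicator_notMem {i : ν} {v : ν × Bool} (hv : v ∉ freeVars R i) (i' : ν) :
    flipBit (centerIndicator i) v ∉ ambainisSunTerm R i' := by
  rintro ⟨h₁, h₂, h₃, h₄⟩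
  obtain ⟨j, _ | _⟩ := v
  · -- flipping in row `false` leaves row `true` the indicator of `i`, so `i' = i`
    have hi' : i' = i := by
      by_contra h
      rw [flipBit_apply_of_ne _ (by simp)] at h₁
      simp [centerIndicator, h] at h₁
    subst hi'
    simp only [freeVars, mem_product, mem_filter, mem_univ, true_and, mem_singleton,
      and_true] at hv
    by_cases hj : j = i'
    · subst hj
      simp [flipBit_apply_self, centerIndicator] at h₂
    · rcases h₄ j (by simp [flipBit_apply_self, centerIndicator, hj]) with h | h
      exacts [hj h, hv h]
  · -- flipping in row `true` leaves it with zero or two ones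
    by_cases hj : j = i
    · subst hj
      by_cases hi' : i' = j
      · subst hi'
        simp [flipBit_apply_self, centerIndicator] at h₁
      · rw [flipBit_apply_of_ne _ (by simp [hi'])] at h₁
        simp [centerIndicator, hi'] at h₁
    · have hj' := h₃ j
      have hi := h₃ i
      rw [flipBit_apply_self] at hj'
      rw [flipBit_apply_of_ne _ (by simp [Ne.symm hj])] at hi
      simp only [centerIndicator, hj, decide_false, Bool.not_false, decide_true] at hj' hi
      grind

lemma le_sensAt_ambainisSun_centerIndicator (i : ν) :
    (freeVars R i)ᶜ.card ≤ sensAt (ambainisSun R) (centerIndicator i) := by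
  refine card_le_card fun v hv => ?_
  have hflip : ambainisSun R (flipBit (centerIndicator i) v) = false :=
    ambainisSun_eq_false_iff.mpr (flipBit_centerIndicator_notMem (mem_compl.mp hv))
  simp [hflip, ambainisSun_eq_true_iff.mpr ⟨i, centerIndicator_mem i⟩]

end AmbainisSun

section Circulant

variable (k : ℕ)

/-- `Fin` subtraction is modular, so this is the circulant tournament on `ℤ/(2k+1)`. -/
def circulant (i j : Fin (2*k+1)) : Prop := (j - i : Fin (2*k+1)).val ∈ Icc 1 k

instance : DecidableRel (circulant k) := fun i j => by
  unfold circulant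
  infer_instance

variable {k}

lemma circulant_irrefl (i : Fin (2*k+1)) : ¬ circulant k i i := by
  simp [circulant]

lemma circulant_asymm {i j : Fin (2*k+1)} (hij : circulant k i j) : ¬ circulant k j i := by
  intro hji
  simp only [circulant, mem_Icc] at hij hji
  -- the two differences sum to `0` modulo `2k+1`, but their values lie in `[2, 2k]`
  have hsum := congrArg Fin.val (sub_add_sub_cancel j i j)
  rw [sub_self, Fin.val_add, Fin.val_zero, Nat.mod_eq_of_lt (by omega)] at hsum
  omega

lemma card_filter_circulant (i : Fin (2*k+1)) : (univ.filter (circulant k i)).card = k := by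
  have hshift : (univ.filter (circulant k i)).card =
      (univ.filter fun d : Fin (2*k+1) => d.val ∈ Icc 1 k).card :=
    card_equiv (Equiv.subRight i) (by simp [circulant])
  have hval : (univ.filter fun d : Fin (2*k+1) => d.val ∈ Icc 1 k).map Fin.valEmbedding =
      Icc 1 k := by
    ext m
    simp only [mem_map, mem_filter, mem_univ, true_and, Fin.valEmbedding_apply]
    refine ⟨fun ⟨d, hd, hdm⟩ => hdm ▸ hd, fun hm => ⟨⟨m, ?_⟩, hm, rfl⟩⟩
    rw [mem_Icc] at hm
    omega
  rw [hshift, ← card_map, hval, Nat.card_Icc, Nat.add_sub_cancel]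

lemma card_compl_freeVars_circulant (i : Fin (2*k+1)) :
    (freeVars (circulant k) i)ᶜ.card = 3*k+2 := by
  rw [card_compl, freeVars, card_product, card_filter_circulant, card_singleton, mul_one]
  simp only [Fintype.card_prod, Fintype.card_fin, Fintype.card_bool]
  omega

end Circulant

noncomputable def twoThirdsFn (k : ℕ) : ((Fin (2*k+1) × Bool) × Fin (3*k+2) → Bool) → Bool :=
  orComp (ambainisSun (circulant k))

lemma sens_twoThirdsFn (k : ℕ) : sens (twoThirdsFn k) = 3*k+2 := by
  apply le_antisymm
  · have hs0 : sens0 (ambainisSun (circulant k)) ≤ 1 :=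
      sens0_ambainisSun_le_one fun _ _ => circulant_asymm
    have hs1 : sens1 (ambainisSun (circulant k)) ≤ 3*k+2 := Finset.sup_le fun x hx => by
      obtain ⟨i, hi⟩ := ambainisSun_eq_true_iff.mp (mem_filter.mp hx).2
      exact (sensAt_ambainisSun_le circulant_irrefl hi).trans_eq (card_compl_freeVars_circulant i)
    refine sens_orComp_le.trans (max_le ?_ hs1)
    simpa using Nat.mul_le_mul_left (3*k+2) hs0
  · let x : (Fin (2*k+1) × Bool) × Fin (3*k+2) → Bool :=
      fun v => if v.2 = 0 then centerIndicator 0 v.1 else false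
    have hx₀ : copyAt x 0 = centerIndicator 0 := rfl
    have hx : ∀ c ≠ 0, copyAt x c = fun _ => false := fun c hc => by
      funext a
      simp [x, copyAt, hc]
    calc 3*k+2 = (freeVars (circulant k) 0)ᶜ.card := (card_compl_freeVars_circulant 0).symm
      _ ≤ sensAt (ambainisSun (circulant k)) (copyAt x 0) :=
          le_sensAt_ambainisSun_centerIndicator 0
      _ ≤ sensAt (twoThirdsFn k) x := sensAt_copyAt_le_sensAt_orComp
          (by rw [hx₀]; exact ambainisSun_eq_true_iff.mpr ⟨0, centerIndicator_mem 0⟩)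
          fun c hc => by rw [hx c hc]; exact ambainisSun_const_false
      _ ≤ sens (twoThirdsFn k) := sensAt_le_sens _ _

lemma bs_twoThirdsFn (k : ℕ) : bs (twoThirdsFn k) = (3*k+2)*(2*k+1) := by
  apply le_antisymm
  · refine (bs_orComp_le isSubcube_ambainisSunTerm fun _ => ambainisSun_eq_true_iff).trans ?_
    simp only [Fintype.card_fin, Fintype.card_prod, Fintype.card_bool]
    exact max_le le_rfl (by nlinarith)
  · calc (3*k+2)*(2*k+1) = Fintype.card (Fin (3*k+2)) * Fintype.card (Fin (2*k+1)) := by simp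
      _ ≤ Fintype.card (Fin (3*k+2)) * bsAt (ambainisSun (circulant k)) fun _ => false :=
          Nat.mul_le_mul_left _ card_le_bsAt_ambainisSun
      _ ≤ bsAt (twoThirdsFn k) fun _ => false :=
          mul_bsAt_le_bsAt_orComp ambainisSun_const_false
      _ ≤ bs (twoThirdsFn k) := bsAt_le_bs _ _

theorem exists_two_thirds_separation_general (k : ℕ) :
    ∃ f : (Fin ((4*k+2)*(3*k+2)) → Bool) → Bool,
      sens f = 3*k+2 ∧ 3 * bs f = 2 * (sens f)^2 - sens f := by
  obtain ⟨e⟩ : Nonempty ((Fin (2*k+1) × Bool) × Fin (3*k+2) ≃ Fin ((4*k+2)*(3*k+2))) := by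
    rw [← Fintype.card_eq]
    simp only [Fintype.card_prod, Fintype.card_fin, Fintype.card_bool]
    ring
  have hs : sens (fun y => twoThirdsFn k (y ∘ e)) = 3*k+2 := by
    rw [sens_comp_equiv, sens_twoThirdsFn]
  refine ⟨fun y => twoThirdsFn k (y ∘ e), hs, ?_⟩
  rw [hs, bs_comp_equiv, bs_twoThirdsFn]
  have : 2*(3*k+2)^2 = 3*((3*k+2)*(2*k+1)) + (3*k+2) := by ring
  omega

/-- For every `k ≥ 1` there is a Boolean function `f` on `(4k+2)(3k+2)` variables with
`s(f) = 3k+2` and `bs(f) = (2/3)·s(f)² − (1/3)·s(f)` (stated over ℕ as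
`3·bs(f) = 2·s(f)² − s(f)`). -/
theorem exists_two_thirds_separation (k : ℕ) (hk : 1 ≤ k) :
    ∃ f : (Fin ((4*k+2)*(3*k+2)) → Bool) → Bool,
      sens f = 3*k+2 ∧ 3 * bs f = 2 * (sens f)^2 - sens f :=
  exists_two_thirds_separation_general k
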